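/- Spectral monotonicity for simple random walk: setting f_n(x) = p_n(x₀,x) + p_{n+1}(x₀,x) where p_n is the heat kernel (p_n(x,y) = P^x(X_n = y)/μ_y), the Dirichlet energy satisfies E(f_n, f_n) = f_{2n}(x₀) − f_{2n+2}(x₀), and consequently E(f_n,f_n) ≤ (2/n) f_{2⌊n/2⌋}(x₀). -/

import Mathlib

open scoped ENNReal

attribute [local instance] Classical.propDecidable

variable {V : Type*}

/-- Degree of a vertex. -/
noncomputable def vdeg (G : SimpleGraph V) (x : V) : ℕ := (G.neighborSet x).ncard

/-- One-step transition probability of the simple random walk: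
`P^x(X_1 = y) = 1/μ_x` for `y ∼ x`, and `0` otherwise. -/
noncomputable def stepP (G : SimpleGraph V) (x y : V) : ℝ :=
  (G.neighborSet x).indicator (fun _ => ((vdeg G x : ℝ))⁻¹) y

/-- `walkP G n x y = P^x(X_n = y)`, the `n`-step transition probability. -/
noncomputable def walkP (G : SimpleGraph V) : ℕ → V → V → ℝ
  | 0, x, y => if x = y then 1 else 0
  | n + 1, x, y => ∑' z : V, stepP G x z * walkP G n z y

/-- The heat kernel `p_n(x,y) = P^x(X_n = y)/μ_y`. -/
noncomputable def hkP (G : SimpleGraph V) (n : ℕ) (x y : V) : ℝ :=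
  walkP G n x y / (vdeg G y : ℝ)

/-- `killedP G B n x y = P^x(X_n = y, n < τ_B)`, the transition probability of the walk
killed upon exiting `B` (the path stays in `B` up to and including time `n`). -/
noncomputable def killedP (G : SimpleGraph V) (B : Set V) : ℕ → V → V → ℝ
  | 0, x, y => if x = y ∧ x ∈ B then 1 else 0
  | n + 1, x, y => ∑' z : V, B.indicator (fun w => stepP G w z) x * killedP G B n z y

/-- `exitTail G B x n = P^x(τ_B > n)`, the tail of the exit time of `B`. -/
noncomputable def exitTail (G : SimpleGraph V) (B : Set V) (x : V) (n : ℕ) : ℝ :=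
  ∑' y : V, killedP G B n x y

/-- `meanExit G B x = E^x τ_B`, the mean exit time of `B`. -/
noncomputable def meanExit (G : SimpleGraph V) (B : Set V) (x : V) : ℝ :=
  ∑' n : ℕ, exitTail G B x n

/-- `firstHitP G B y n x = P^x(T_y = n, n < τ_B)`: the probability that the walk started
at `x` first hits `y` at time `n`, before exiting `B`. -/
noncomputable def firstHitP (G : SimpleGraph V) (B : Set V) (y : V) : ℕ → V → ℝ
  | 0, x => if x = y ∧ x ∈ B then 1 else 0
  | n + 1, x => ∑' z : V, (B \ {y}).indicator (fun w => stepP G w z) x * firstHitP G B y n z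

/-- The Green kernel of the walk killed on exiting `B`:
`g_B(x,y) = μ_y⁻¹ ∑_{k≥0} P^x(X_k = y, k < τ_B)`. -/
noncomputable def greenB (G : SimpleGraph V) (B : Set V) (x y : V) : ℝ :=
  (∑' n : ℕ, killedP G B n x y) / (vdeg G y : ℝ)

/-- The real-valued Dirichlet energy `E(f,f) = (1/2) ∑_{x∼y} (f x - f y)²`. -/
noncomputable def rEnergy (G : SimpleGraph V) (f : V → ℝ) : ℝ :=
  2⁻¹ * ∑' e : {p : V × V // G.Adj p.1 p.2}, (f e.val.1 - f e.val.2) ^ 2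

/-!
Write `P` for the transition operator of the walk and `⟨f, g⟩ = ∑ₓ deg x f(x) g(x)` for the
inner product of `ℓ²(μ)`. Reversibility of the walk makes `P` self-adjoint on finitely supported
functions, and `q_k = p_k(x₀, ·)` satisfies `q_k = P^k q_0`, hence `⟨q_a, q_b⟩ = p_{a+b}(x₀, x₀)`.
Summing over oriented edges gives `E(f, f) = ⟨f, f⟩ - ⟨f, P f⟩` and `0 ≤ ⟨f, f⟩ + ⟨f, P f⟩`.
The first, for `f = q_n + q_{n+1}`, is the energy identity; the second, for `f = q_k` and
`f = q_k - q_{k+2}`, shows that `b_k = f_{2k}(x₀)` is nonnegative and convex. For such a sequence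
`(n - ⌊n/2⌋) (b_n - b_{n+1}) ≤ b_{⌊n/2⌋} - b_n ≤ b_{⌊n/2⌋}`.
-/

open Function Finset

section LocallyFinite

variable (G : SimpleGraph V) [G.LocallyFinite]

@[simp]
lemma vdeg_eq_degree (x : V) : vdeg G x = G.degree x := by
  rw [vdeg, Set.ncard_eq_toFinset_card', ← G.card_neighborFinset_eq_degree]
  rfl

noncomputable def transOp : (V → ℝ) →ₗ[ℝ] V → ℝ where
  toFun f x := (G.degree x : ℝ)⁻¹ * ∑ y ∈ G.neighborFinset x, f y
  map_add' f g := by ext x; simp [sum_add_distrib, mul_add]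
  map_smul' c f := by ext x; simp [mul_sum, mul_left_comm]

lemma transOp_apply (f : V → ℝ) (x : V) :
    transOp G f x = (G.degree x : ℝ)⁻¹ * ∑ y ∈ G.neighborFinset x, f y :=
  rfl

lemma tsum_stepP_mul (f : V → ℝ) (x : V) : ∑' y, stepP G x y * f y = transOp G f x := by
  rw [transOp_apply, mul_sum, tsum_eq_sum (s := G.neighborFinset x)]
  · refine sum_congr rfl fun y hy => ?_
    rw [stepP, Set.indicator_of_mem (by simpa using hy), vdeg_eq_degree]
  · intro y hy
    rw [stepP, Set.indicator_of_notMem (by simpa using hy), zero_mul]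

lemma degree_mul_transOp (f : V → ℝ) (x : V) :
    (G.degree x : ℝ) * transOp G f x = ∑ y ∈ G.neighborFinset x, f y := by
  rcases eq_or_ne (G.degree x) 0 with h | h
  · have hN : G.neighborFinset x = ∅ := by
      rwa [← card_eq_zero, G.card_neighborFinset_eq_degree]
    simp [h, hN]
  · rw [transOp_apply, mul_inv_cancel_left₀ (Nat.cast_ne_zero.mpr h)]

lemma hasFiniteSupport_transOp {f : V → ℝ} (hf : f.HasFiniteSupport) :
    (transOp G f).HasFiniteSupport := by
  refine (Set.Finite.biUnion hf fun y _ => (G.neighborSet y).toFinite).subset fun x hx => ?_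
  obtain ⟨y, hy, hfy⟩ := exists_ne_zero_of_sum_ne_zero (right_ne_zero_of_mul hx)
  exact Set.mem_biUnion hfy ((G.mem_neighborFinset x y).mp hy).symm

lemma hasFiniteSupport_iterate_transOp {f : V → ℝ} (hf : f.HasFiniteSupport) (n : ℕ) :
    ((transOp G)^[n] f).HasFiniteSupport := by
  induction n with
  | zero => exact hf
  | succ n ih => rw [iterate_succ_apply']; exact hasFiniteSupport_transOp G ih

lemma hasSum_adj_mul {g : V → ℝ} (hg : g.HasFiniteSupport) (h : V → ℝ) :
    HasSum (fun e : {p : V × V // G.Adj p.1 p.2} => g e.1.1 * h e.1.2)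
      (∑' x, g x * ∑ y ∈ G.neighborFinset x, h y) := by
  set A : Set (V × V) := {p | G.Adj p.1 p.2}
  set F : V × V → ℝ := fun p => g p.1 * h p.2
  have hA : (A.indicator F).HasFiniteSupport := by
    refine (Set.Finite.prod hg (Set.Finite.biUnion hg fun x _ => (G.neighborSet x).toFinite)).subset
      fun p hp => ?_
    obtain ⟨hadj, hFp⟩ := Set.indicator_apply_ne_zero.mp (mem_support.mp hp)
    have hgp : g p.1 ≠ 0 := left_ne_zero_of_mul hFp
    exact ⟨hgp, Set.mem_biUnion hgp hadj⟩
  have hsum : Summable (A.indicator F) := summable_of_hasFiniteSupport hA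
  have key : HasSum (fun e : {p : V × V // G.Adj p.1 p.2} => F e) (∑' p, A.indicator F p) := by
    rw [← _root_.tsum_subtype]
    exact (summable_subtype_iff_indicator.mpr hsum).hasSum
  rw [Summable.tsum_prod (f := A.indicator F) hsum] at key
  convert key using 1
  refine tsum_congr fun x => ?_
  rw [mul_sum, tsum_eq_sum (s := G.neighborFinset x)]
  · refine sum_congr rfl fun y hy => ?_
    exact (Set.indicator_of_mem (a := (x, y)) ((G.mem_neighborFinset x y).mp hy) F).symm
  · intro y hy
    exact Set.indicator_of_notMem (by simpa [A] using hy) _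

lemma hasSum_adj_mul_swap (g : V → ℝ) {h : V → ℝ} (hh : h.HasFiniteSupport) :
    HasSum (fun e : {p : V × V // G.Adj p.1 p.2} => g e.1.1 * h e.1.2)
      (∑' y, h y * ∑ x ∈ G.neighborFinset y, g x) := by
  let swap : {p : V × V // G.Adj p.1 p.2} ≃ {p : V × V // G.Adj p.1 p.2} :=
    (Equiv.prodComm V V).subtypeEquiv fun p => G.adj_comm p.1 p.2
  rw [← swap.hasSum_iff]
  convert hasSum_adj_mul G hh g using 1
  funext e
  exact mul_comm _ _

noncomputable def degInner (f g : V → ℝ) : ℝ := ∑' x, (G.degree x : ℝ) * (f x * g x)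

lemma summable_degInner {f : V → ℝ} (hf : f.HasFiniteSupport) (g : V → ℝ) :
    Summable fun x => (G.degree x : ℝ) * (f x * g x) :=
  summable_of_hasFiniteSupport <|
    Set.Finite.subset hf fun _ hx => left_ne_zero_of_mul (right_ne_zero_of_mul hx)

lemma degInner_comm (f g : V → ℝ) : degInner G f g = degInner G g f := by
  simp only [degInner, mul_comm (f _)]

lemma degInner_add_add {a b : V → ℝ} (ha : a.HasFiniteSupport) (hb : b.HasFiniteSupport)
    (c d : V → ℝ) :
    degInner G (a + b) (c + d) =
      degInner G a c + degInner G a d + degInner G b c + degInner G b d := by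
  unfold degInner
  rw [← ((((summable_degInner G ha c).hasSum.add (summable_degInner G ha d).hasSum).add
    (summable_degInner G hb c).hasSum).add (summable_degInner G hb d).hasSum).tsum_eq]
  congr 1
  funext x
  simp only [Pi.add_apply]
  ring

lemma degInner_sub_sub {a b : V → ℝ} (ha : a.HasFiniteSupport) (hb : b.HasFiniteSupport)
    (c d : V → ℝ) :
    degInner G (a - b) (c - d) =
      degInner G a c - degInner G a d - degInner G b c + degInner G b d := by
  unfold degInner
  rw [← ((((summable_degInner G ha c).hasSum.sub (summable_degInner G ha d).hasSum).sub
    (summable_degInner G hb c).hasSum).add (summable_degInner G hb d).hasSum).tsum_eq]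
  congr 1
  funext x
  simp only [Pi.sub_apply]
  ring

lemma degInner_transOp (f g : V → ℝ) :
    degInner G f (transOp G g) = ∑' x, f x * ∑ y ∈ G.neighborFinset x, g y := by
  simp only [degInner, ← degree_mul_transOp G g, mul_left_comm]

lemma degInner_transOp_comm {f g : V → ℝ} (hf : f.HasFiniteSupport) (hg : g.HasFiniteSupport) :
    degInner G f (transOp G g) = degInner G (transOp G f) g := by
  rw [degInner_comm G _ g, degInner_transOp G, degInner_transOp G]
  exact (hasSum_adj_mul G hf g).unique (hasSum_adj_mul_swap G f hg)

lemma degInner_iterate_transOp {f g : V → ℝ} (hf : f.HasFiniteSupport)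
    (hg : g.HasFiniteSupport) (a b : ℕ) :
    degInner G ((transOp G)^[a] f) ((transOp G)^[b] g) = degInner G f ((transOp G)^[a + b] g) := by
  induction a generalizing b with
  | zero => rw [zero_add]; rfl
  | succ a ih =>
    rw [iterate_succ_apply', ← degInner_transOp_comm G (hasFiniteSupport_iterate_transOp G hf a)
      (hasFiniteSupport_iterate_transOp G hg b), ← iterate_succ_apply' (transOp G), ih,
      add_right_comm, add_assoc]

lemma hasSum_adj_sq {f : V → ℝ} (hf : f.HasFiniteSupport) (c : ℝ) :
    HasSum (fun e : {p : V × V // G.Adj p.1 p.2} => (f e.1.1 + c * f e.1.2) ^ 2)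
      ((1 + c ^ 2) * degInner G f f + 2 * c * degInner G f (transOp G f)) := by
  have hff : (fun x => f x * f x).HasFiniteSupport := hf.mul_right f
  have hdeg : ∀ x, ∑ _y ∈ G.neighborFinset x, (1 : ℝ) = G.degree x := by simp
  have hfst := hasSum_adj_mul G hff fun _ => 1
  have hsnd := hasSum_adj_mul_swap G (fun _ => 1) hff
  have hcross := hasSum_adj_mul G hf f
  simp only [hdeg, ← degInner_transOp G] at hfst hsnd hcross
  convert (hfst.add (hsnd.mul_left (c ^ 2))).add (hcross.mul_left (2 * c)) using 1
  · funext e; ring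
  · simp only [degInner, mul_comm (G.degree _ : ℝ)]; ring

lemma rEnergy_eq_degInner_sub {f : V → ℝ} (hf : f.HasFiniteSupport) :
    rEnergy G f = degInner G f f - degInner G f (transOp G f) := by
  have h := (hasSum_adj_sq G hf (-1)).tsum_eq
  simp only [neg_one_mul, ← sub_eq_add_neg] at h
  rw [rEnergy, h]
  ring

lemma degInner_add_degInner_transOp_nonneg {f : V → ℝ} (hf : f.HasFiniteSupport) :
    0 ≤ degInner G f f + degInner G f (transOp G f) := by
  have h := (hasSum_adj_sq G hf 1).nonneg fun e => sq_nonneg _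
  linarith

end LocallyFinite

noncomputable def hkSum (G : SimpleGraph V) (n : ℕ) (x₀ : V) : V → ℝ :=
  hkP G n x₀ + hkP G (n + 1) x₀

section HeatKernel

variable (G : SimpleGraph V)

lemma hasFiniteSupport_walkP_zero (y : V) : (fun x => walkP G 0 x y).HasFiniteSupport :=
  (Set.finite_singleton y).subset fun x hx => by simpa [walkP] using hx

variable [G.LocallyFinite]

lemma walkP_eq_iterate (n : ℕ) (y : V) :
    (fun x => walkP G n x y) = (transOp G)^[n] (fun x => walkP G 0 x y) := by
  induction n with
  | zero => rfl
  | succ n ih =>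
    funext x
    rw [iterate_succ_apply', ← ih, ← tsum_stepP_mul]
    rfl

lemma degInner_walkP_zero_left (y : V) (g : V → ℝ) :
    degInner G (fun x => walkP G 0 x y) g = G.degree y * g y := by
  rw [degInner, tsum_eq_single y]
  · simp [walkP]
  · intro x hx
    simp [walkP, hx]

lemma degree_mul_walkP_comm (n : ℕ) (x y : V) :
    (G.degree x : ℝ) * walkP G n x y = G.degree y * walkP G n y x := by
  have hx := hasFiniteSupport_walkP_zero G x
  have hy := hasFiniteSupport_walkP_zero G y
  calc (G.degree x : ℝ) * walkP G n x y
      = degInner G (fun z => walkP G 0 z x) ((transOp G)^[n] fun z => walkP G 0 z y) := by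
        rw [degInner_walkP_zero_left, ← walkP_eq_iterate]
    _ = degInner G ((transOp G)^[n] fun z => walkP G 0 z y)
          ((transOp G)^[0] fun z => walkP G 0 z x) :=
        degInner_comm G _ _
    _ = degInner G (fun z => walkP G 0 z y) ((transOp G)^[n] fun z => walkP G 0 z x) :=
        degInner_iterate_transOp G hy hx n 0
    _ = G.degree y * walkP G n y x := by
        rw [degInner_walkP_zero_left, ← walkP_eq_iterate]

variable {G} (hd : ∀ v, G.degree v ≠ 0)
include hd

lemma hkP_comm (n : ℕ) (x y : V) : hkP G n x y = hkP G n y x := by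
  simp only [hkP, vdeg_eq_degree]
  rw [div_eq_div_iff (Nat.cast_ne_zero.mpr (hd y)) (Nat.cast_ne_zero.mpr (hd x))]
  linear_combination degree_mul_walkP_comm G n x y

lemma hkP_succ (n : ℕ) (x₀ : V) : hkP G (n + 1) x₀ = transOp G (hkP G n x₀) := by
  funext x
  rw [hkP_comm hd, ← tsum_stepP_mul]
  simp only [hkP_comm hd n x₀]
  simp only [hkP, walkP, ← tsum_div_const, mul_div_assoc]

lemma hkP_eq_iterate (n : ℕ) (x₀ : V) : hkP G n x₀ = (transOp G)^[n] (hkP G 0 x₀) := by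
  induction n with
  | zero => rfl
  | succ n ih => rw [iterate_succ_apply', ← ih, hkP_succ hd]

lemma hasFiniteSupport_hkP (n : ℕ) (x₀ : V) : (hkP G n x₀).HasFiniteSupport := by
  have h0 : (hkP G 0 x₀).HasFiniteSupport :=
    (Set.finite_singleton x₀).subset fun x hx =>
      Set.mem_singleton_iff.mpr (by_contra fun h => hx (by simp [hkP, walkP, Ne.symm h]))
  rw [hkP_eq_iterate hd]
  exact hasFiniteSupport_iterate_transOp G h0 n

lemma degInner_hkP_zero_left (x₀ : V) (g : V → ℝ) : degInner G (hkP G 0 x₀) g = g x₀ := by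
  rw [degInner, tsum_eq_single x₀]
  · simp [hkP, walkP, hd]
  · intro x hx
    simp [hkP, walkP, Ne.symm hx]

lemma degInner_hkP (a b : ℕ) (x₀ : V) :
    degInner G (hkP G a x₀) (hkP G b x₀) = hkP G (a + b) x₀ x₀ := by
  rw [hkP_eq_iterate hd a, hkP_eq_iterate hd b, degInner_iterate_transOp G
    (hasFiniteSupport_hkP hd 0 x₀) (hasFiniteSupport_hkP hd 0 x₀), ← hkP_eq_iterate hd,
    degInner_hkP_zero_left hd]

lemma rEnergy_hkSum (x₀ : V) (n : ℕ) :
    rEnergy G (hkSum G n x₀) = hkSum G (2 * n) x₀ x₀ - hkSum G (2 * n + 2) x₀ x₀ := by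
  have hq := hasFiniteSupport_hkP hd (x₀ := x₀)
  have hPf : transOp G (hkSum G n x₀) = hkP G (n + 1) x₀ + hkP G (n + 2) x₀ := by
    rw [hkSum, map_add, ← hkP_succ hd, ← hkP_succ hd]
  rw [rEnergy_eq_degInner_sub G (f := hkSum G n x₀) ((hq n).add (hq (n + 1))), hPf, hkSum,
    degInner_add_add G (hq n) (hq (n + 1)), degInner_add_add G (hq n) (hq (n + 1))]
  simp only [degInner_hkP hd, hkSum, Pi.add_apply]
  ring_nf

lemma hkSum_diag_nonneg (x₀ : V) (k : ℕ) : 0 ≤ hkSum G (2 * k) x₀ x₀ := by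
  have h := degInner_add_degInner_transOp_nonneg G (hasFiniteSupport_hkP hd k x₀)
  rw [← hkP_succ hd, degInner_hkP hd, degInner_hkP hd] at h
  simpa only [hkSum, Pi.add_apply, two_mul, add_assoc] using h

lemma hkSum_diag_convex (x₀ : V) (k : ℕ) :
    hkSum G (2 * (k + 1)) x₀ x₀ - hkSum G (2 * (k + 2)) x₀ x₀ ≤
      hkSum G (2 * k) x₀ x₀ - hkSum G (2 * (k + 1)) x₀ x₀ := by
  have hq := hasFiniteSupport_hkP hd (x₀ := x₀)
  have hg := (hq k).sub (hq (k + 2))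
  have hPg : transOp G (hkP G k x₀ - hkP G (k + 2) x₀) = hkP G (k + 1) x₀ - hkP G (k + 3) x₀ := by
    rw [map_sub, ← hkP_succ hd, ← hkP_succ hd]
  have h := degInner_add_degInner_transOp_nonneg G hg
  rw [hPg, degInner_sub_sub G (hq k) (hq (k + 2)), degInner_sub_sub G (hq k) (hq (k + 2))] at h
  simp only [degInner_hkP hd] at h
  simp only [hkSum, Pi.add_apply]
  ring_nf at h ⊢
  linarith

end HeatKernel

lemma sub_succ_le_two_div_mul_of_convex {b : ℕ → ℝ} (hb : ∀ k, 0 ≤ b k)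
    (hconv : ∀ k, b (k + 1) - b (k + 2) ≤ b k - b (k + 1)) {n : ℕ} (hn : 1 ≤ n) :
    b n - b (n + 1) ≤ 2 / n * b (n / 2) := by
  set m := n / 2
  have hanti : Antitone fun k => b k - b (k + 1) := antitone_nat_of_succ_le hconv
  have hsum : ((n - m : ℕ) : ℝ) * (b n - b (n + 1)) ≤ b m - b n := by
    have h := card_nsmul_le_sum (range (n - m)) (fun i => b (m + i) - b (m + (i + 1)))
      (b n - b (n + 1)) fun i hi => hanti (by simp at hi; omega)
    rwa [sum_range_sub' (fun i => b (m + i)), card_range, nsmul_eq_mul, add_zero,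
      Nat.add_sub_cancel' (Nat.div_le_self n 2)] at h
  have hnm : (n : ℝ) ≤ 2 * ((n - m : ℕ) : ℝ) := by norm_cast; omega
  have hn' : (0 : ℝ) < n := by exact_mod_cast hn
  rw [div_mul_eq_mul_div, le_div_iff₀ hn']
  rcases le_or_gt 0 (b n - b (n + 1)) with ha | ha
  · nlinarith [hb n]
  · nlinarith [hb m]

/-- with `f_n(x) = p_n(x₀,x) + p_{n+1}(x₀,x)`, the Dirichlet energy satisfies
`E(f_n,f_n) = f_{2n}(x₀) − f_{2n+2}(x₀)`, and consequently
`E(f_n,f_n) ≤ (2/n) f_{2⌊n/2⌋}(x₀)`. -/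
theorem energy_heat_kernel (G : SimpleGraph V) [Infinite V]
    (hconn : G.Connected) (hlf : ∀ v : V, (G.neighborSet v).Finite)
    (x₀ : V) (n : ℕ) (hn : 1 ≤ n) :
    rEnergy G (fun x => hkP G n x₀ x + hkP G (n + 1) x₀ x)
        = (hkP G (2 * n) x₀ x₀ + hkP G (2 * n + 1) x₀ x₀)
          - (hkP G (2 * n + 2) x₀ x₀ + hkP G (2 * n + 3) x₀ x₀) ∧
    rEnergy G (fun x => hkP G n x₀ x + hkP G (n + 1) x₀ x)
        ≤ (2 / n) * (hkP G (2 * (n / 2)) x₀ x₀ + hkP G (2 * (n / 2) + 1) x₀ x₀) := by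
  have : G.LocallyFinite := fun v => (hlf v).fintype
  have hd : ∀ v, G.degree v ≠ 0 := fun v => (hconn.preconnected.degree_pos_of_nontrivial v).ne'
  have henergy := rEnergy_hkSum hd x₀ n
  refine ⟨henergy, ?_⟩
  change rEnergy G (hkSum G n x₀) ≤ 2 / n * hkSum G (2 * (n / 2)) x₀ x₀
  rw [henergy]
  exact sub_succ_le_two_div_mul_of_convex (b := fun k => hkSum G (2 * k) x₀ x₀)
    (hkSum_diag_nonneg hd x₀) (hkSum_diag_convex hd x₀) hn
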